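/- For real scalars a, b, c, d, the map T(ω,x) = (aω + bx, cω + dx) on pairs of real sequences is bounded on Z₂ if and only if a = d and c = 0. -/

import Mathlib

open scoped BigOperators

noncomputable section

/-- Real sequences. -/
abbrev RSeq : Type := ℕ → ℝ

/-- Membership in ℓ². -/
def memL2 (x : RSeq) : Prop := Summable (fun n => (x n) ^ 2)

/-- The ℓ² norm. -/
noncomputable def l2norm (x : RSeq) : ℝ := Real.sqrt (∑' n, (x n) ^ 2)

/-- The Kalton–Peck map, defined coordinatewise.  (In Lean, `Real.log 0 = 0` and
division by zero is zero, so the conventions `0·log 0 = 0` and `KP 0 = 0` hold.) -/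
noncomputable def KP (x : RSeq) : RSeq := fun n => 2 * x n * Real.log (|x n| / l2norm x)

/-- Membership in the Kalton–Peck space Z₂. -/
def memZ2 (u : RSeq × RSeq) : Prop := memL2 u.2 ∧ memL2 (u.1 - KP u.2)

/-- The Z₂ quasinorm. -/
noncomputable def Z2norm (u : RSeq × RSeq) : ℝ := l2norm (u.1 - KP u.2) + l2norm u.2

/-- A map on pairs of sequences is bounded on Z₂. -/
def BoundedOnZ2 (T : RSeq × RSeq → RSeq × RSeq) : Prop :=
  (∀ u, memZ2 u → memZ2 (T u)) ∧ ∃ C : ℝ, ∀ u, memZ2 u → Z2norm (T u) ≤ C * Z2norm u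

/-- The matrix operator associated to four linear maps on sequences. -/
def matOp (α β δ γ : RSeq →ₗ[ℝ] RSeq) : RSeq × RSeq → RSeq × RSeq :=
  fun u => (α u.1 + β u.2, δ u.1 + γ u.2)

/-- Membership in the Orlicz space ℓ_f = Dom KP. -/
def memLf (x : RSeq) : Prop := memL2 x ∧ memL2 (KP x)

/-- The ℓ_f quasinorm. -/
noncomputable def lfNorm (x : RSeq) : ℝ := l2norm (KP x) + l2norm x

/-- Membership in ℓ_f* = Ran KP. -/
def memLfStar (ω : RSeq) : Prop := ∃ x : RSeq, memL2 x ∧ memL2 (ω - KP x)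

/-- The ℓ_f* quasinorm. -/
noncomputable def lfStarNorm (ω : RSeq) : ℝ :=
  sInf {r : ℝ | ∃ x : RSeq, memL2 x ∧ memL2 (ω - KP x) ∧ r = l2norm (ω - KP x) + l2norm x}

/-- A bounded map on Z₂ is strictly singular if every linear subspace of Z₂ on which it is
bounded below is finite dimensional. -/
def StrictlySingular (T : RSeq × RSeq → RSeq × RSeq) : Prop :=
  ∀ V : Submodule ℝ (RSeq × RSeq), (∀ v ∈ V, memZ2 v) →
    (∃ c > 0, ∀ v ∈ V, c * Z2norm v ≤ Z2norm (T v)) → FiniteDimensional ℝ V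

/-- A set of sequences is totally bounded (relatively compact) for the ℓ² norm. -/
def l2TotallyBounded (A : Set RSeq) : Prop :=
  ∀ ε > 0, ∃ S : Set RSeq, S.Finite ∧
    ∀ a ∈ A, ∃ s ∈ S, memL2 (a - s) ∧ l2norm (a - s) < ε

/-- A map on Z₂ is compact if the image of the unit ball is totally bounded for the
Z₂ quasinorm. -/
def CompactOnZ2 (T : RSeq × RSeq → RSeq × RSeq) : Prop :=
  ∀ ε > 0, ∃ S : Set (RSeq × RSeq), S.Finite ∧
    ∀ u, memZ2 u → Z2norm u ≤ 1 → ∃ s ∈ S, memZ2 (T u - s) ∧ Z2norm (T u - s) < ε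

/-!
Both directions come down to one computation: for the sequence `𝟙_N = blockOne N`, equal to
`1` on the first `N` coordinates and `0` afterwards, `KP (t • 𝟙_N) = -(t log N) • 𝟙_N`, so
`‖(s • 𝟙_N, t • 𝟙_N)‖_{Z₂} = (|s + t log N| + |t|) √N`. Testing `T` on `(𝟙_N, 0)` and on
`(KP 𝟙_N, 𝟙_N)`, both of quasinorm `√N`, bounds `|a + c log N|` and then `|b + (d - a) log N|`
uniformly in `N`, which forces `c = 0` and `d = a`. Conversely, for `T = [[a, b], [0, a]]`
homogeneity of `KP` gives `(aω + bx) - KP (ax) = a (ω - KP x) + b x`, so `T` is bounded with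
constant `|a| + |b|`.
-/

open Filter

lemma memL2_iff_memℓp (x : RSeq) : memL2 x ↔ Memℓp x 2 := by
  simp [memL2, memℓp_gen_iff (show 0 < (2 : ENNReal).toReal by norm_num)]

lemma l2norm_eq_norm_lp {x : RSeq} (hx : memL2 x) :
    l2norm x = ‖(⟨x, (memL2_iff_memℓp x).1 hx⟩ : lp (fun _ : ℕ => ℝ) 2)‖ := by
  have h := lp.norm_rpow_eq_tsum (by norm_num : 0 < (2 : ENNReal).toReal)
    (⟨x, (memL2_iff_memℓp x).1 hx⟩ : lp (fun _ : ℕ => ℝ) 2)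
  simp only [ENNReal.toReal_ofNat, Real.rpow_two, Real.norm_eq_abs, sq_abs] at h
  rw [l2norm, ← Real.sqrt_sq (norm_nonneg _), h]

lemma l2norm_nonneg (x : RSeq) : 0 ≤ l2norm x := Real.sqrt_nonneg _

lemma memL2.add {x y : RSeq} (hx : memL2 x) (hy : memL2 y) : memL2 (x + y) :=
  (memL2_iff_memℓp _).2 (((memL2_iff_memℓp x).1 hx).add ((memL2_iff_memℓp y).1 hy))

lemma memL2.const_smul {x : RSeq} (hx : memL2 x) (t : ℝ) : memL2 (t • x) := by
  simpa [memL2, mul_pow] using hx.mul_left (t ^ 2)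

lemma l2norm_add_le {x y : RSeq} (hx : memL2 x) (hy : memL2 y) :
    l2norm (x + y) ≤ l2norm x + l2norm y := by
  rw [l2norm_eq_norm_lp hx, l2norm_eq_norm_lp hy, l2norm_eq_norm_lp (hx.add hy)]
  exact norm_add_le (⟨x, (memL2_iff_memℓp x).1 hx⟩ : lp (fun _ : ℕ => ℝ) 2)
    ⟨y, (memL2_iff_memℓp y).1 hy⟩

lemma l2norm_smul (t : ℝ) (x : RSeq) : l2norm (t • x) = |t| * l2norm x := by
  simp only [l2norm, Pi.smul_apply, smul_eq_mul, mul_pow, tsum_mul_left,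
    Real.sqrt_mul (sq_nonneg t), Real.sqrt_sq_eq_abs]

lemma KP_smul (t : ℝ) (x : RSeq) : KP (t • x) = t • KP x := by
  rcases eq_or_ne t 0 with rfl | ht
  · funext n; simp [KP]
  · funext n
    simp only [KP, Pi.smul_apply, smul_eq_mul, l2norm_smul, abs_mul,
      mul_div_mul_left _ _ (abs_ne_zero.2 ht)]
    ring

def blockOne (N : ℕ) : RSeq := fun n => if n < N then 1 else 0

lemma memL2_blockOne (N : ℕ) : memL2 (blockOne N) :=
  summable_of_ne_finset_zero (s := Finset.range N) fun n hn => by simp_all [blockOne]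

lemma l2norm_blockOne (N : ℕ) : l2norm (blockOne N) = Real.sqrt N := by
  rw [l2norm, tsum_eq_sum (s := Finset.range N) fun n hn => by simp_all [blockOne]]
  rw [Finset.sum_congr rfl (g := fun _ => 1) fun n hn => by simp_all [blockOne]]
  simp

lemma KP_blockOne (N : ℕ) : KP (blockOne N) = (-Real.log N) • blockOne N := by
  funext n
  by_cases h : n < N
  · simp [KP, blockOne, h, l2norm_blockOne, Real.log_inv, Real.log_sqrt (Nat.cast_nonneg N)]
    ring
  · simp [KP, blockOne, h]

lemma memZ2_blockOne (s t : ℝ) (N : ℕ) : memZ2 (s • blockOne N, t • blockOne N) := by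
  refine ⟨(memL2_blockOne N).const_smul t, ?_⟩
  rw [KP_smul, KP_blockOne, smul_smul, ← sub_smul]
  exact (memL2_blockOne N).const_smul _

lemma Z2norm_blockOne (s t : ℝ) (N : ℕ) :
    Z2norm (s • blockOne N, t • blockOne N) = (|s + t * Real.log N| + |t|) * Real.sqrt N := by
  simp only [Z2norm, KP_smul, KP_blockOne, smul_smul, ← sub_smul, l2norm_smul, l2norm_blockOne]
  ring_nf

lemma eq_zero_of_abs_add_mul_log_le {p q C : ℝ}
    (h : ∀ N : ℕ, 0 < N → |p + q * Real.log N| ≤ C) : q = 0 := by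
  by_contra hq
  have hlog : Tendsto (fun N : ℕ => Real.log N) atTop atTop :=
    Real.tendsto_log_atTop.comp tendsto_natCast_atTop_atTop
  obtain ⟨N, hN, hNpos⟩ :=
    ((hlog.eventually_gt_atTop ((C + |p|) / |q|)).and (eventually_gt_atTop 0)).exists
  have hqlog : |q| * Real.log N ≤ C + |p| := by
    have h₁ := h N hNpos
    have h₂ : |q * Real.log N| ≤ |p + q * Real.log N| + |p| := by
      simpa [add_comm] using abs_sub_le (q * Real.log N) (p + q * Real.log N) 0
    rw [abs_mul, abs_of_nonneg (Real.log_natCast_nonneg N)] at h₂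
    linarith
  rw [div_lt_iff₀ (abs_pos.2 hq)] at hN
  linarith

lemma sub_KP_upperTriangular (a b : ℝ) (ω x : RSeq) :
    a • ω + b • x - KP (a • x) = a • (ω - KP x) + b • x := by
  rw [KP_smul, smul_sub]
  abel

lemma boundedOnZ2_upperTriangular (a b : ℝ) :
    BoundedOnZ2 (fun u : RSeq × RSeq => (a • u.1 + b • u.2, a • u.2)) := by
  refine ⟨fun ⟨ω, x⟩ ⟨hx, hωx⟩ => ⟨hx.const_smul a, ?_⟩, |a| + |b|,
    fun ⟨ω, x⟩ ⟨hx, hωx⟩ => ?_⟩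
  · rw [sub_KP_upperTriangular]
    exact (hωx.const_smul a).add (hx.const_smul b)
  · have hfirst :
        l2norm (a • (ω - KP x) + b • x) ≤ |a| * l2norm (ω - KP x) + |b| * l2norm x := by
      simpa only [l2norm_smul] using l2norm_add_le (hωx.const_smul a) (hx.const_smul b)
    simp only [Z2norm, sub_KP_upperTriangular, l2norm_smul]
    nlinarith [abs_nonneg a, abs_nonneg b, l2norm_nonneg (ω - KP x), l2norm_nonneg x]

lemma abs_add_mul_log_le_of_Z2norm_le {a b c d C : ℝ}
    (hC : ∀ u, memZ2 u → Z2norm (a • u.1 + b • u.2, c • u.1 + d • u.2) ≤ C * Z2norm u)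
    (s t : ℝ) {N : ℕ} (hN : 0 < N) :
    |a * s + b * t + (c * s + d * t) * Real.log N| + |c * s + d * t| ≤
      C * (|s + t * Real.log N| + |t|) := by
  have h := hC _ (memZ2_blockOne s t N)
  simp only [smul_smul, ← add_smul, Z2norm_blockOne] at h
  rw [← mul_assoc] at h
  exact le_of_mul_le_mul_right h (Real.sqrt_pos.2 (Nat.cast_pos.2 hN))

/-- For scalars a, b, c, d, the map T(ω,x) = (aω + bx, cω + dx) is bounded
on Z₂ if and only if a = d and c = 0. -/
theorem stmt_9 (a b c d : ℝ) :
    BoundedOnZ2 (fun u : RSeq × RSeq => (a • u.1 + b • u.2, c • u.1 + d • u.2)) ↔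
      a = d ∧ c = 0 := by
  constructor
  · rintro ⟨-, C, hC⟩
    have hc : c = 0 := eq_zero_of_abs_add_mul_log_le (p := a) (C := C) fun N hN => by
      have h := abs_add_mul_log_le_of_Z2norm_le hC 1 0 hN
      simp only [mul_one, mul_zero, add_zero, zero_mul, abs_one, abs_zero] at h
      linarith [abs_nonneg c]
    have hda : d - a = 0 := eq_zero_of_abs_add_mul_log_le (p := b) (C := C) fun N hN => by
      have h := abs_add_mul_log_le_of_Z2norm_le hC (-Real.log N) 1 hN
      have hlhs : a * -Real.log N + b * 1 + (c * -Real.log N + d * 1) * Real.log N =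
          b + (d - a) * Real.log N := by rw [hc]; ring
      rw [hlhs, neg_add_eq_zero.2 (one_mul _).symm, abs_zero, abs_one, zero_add, mul_one] at h
      linarith [abs_nonneg (c * -Real.log N + d)]
    exact ⟨by linarith, hc⟩
  · rintro ⟨rfl, rfl⟩
    simpa only [zero_smul, zero_add] using boundedOnZ2_upperTriangular a b
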